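/- arXiv:1807.07864 — 5 statements merged into one kernel-verified Lean document; each statement's English description precedes it below -/
import Mathlib

section
/- Consider a BCN in which the state variables {1,...,n} can be partitioned into a single 'observed path' (i_1, ..., i_n) where X_{i_n} is directly measurable (Y(k) = X_{i_n}(k)) and for each t < n, the update function of X_{i_{t+1}} is a function of X_{i_t} alone, being either identity or negation. Then the BCN is observable on [0, n-1]: the output sequence Y(0),...,Y(n-1) uniquely determines the initial state X(0), for every input sequence. -/
/-- Trajectory of a Boolean control network X(k+1) = f(X(k), U(k)). -/
def traj {n p : ℕ} (f : (Fin n → Bool) → (Fin p → Bool) → (Fin n → Bool))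
    (U : ℕ → (Fin p → Bool)) (x0 : Fin n → Bool) : ℕ → (Fin n → Bool)
  | 0 => x0
  | k + 1 => f (traj f U x0 k) (U k)

/-- Composition g (s+k-1) ∘ ... ∘ g s. -/
def Gc (g : ℕ → Bool → Bool) (s : ℕ) : ℕ → Bool → Bool
  | 0 => id
  | k + 1 => g (s + k) ∘ Gc g s k

/-- If the state variables form a single observed path (idx 0, ..., idx (n-1)),
where the last one is directly measurable and each next one's update is the identity
or negation of the previous one, then the BCN is observable on [0, n-1]. -/
theorem single_observed_path_observable (n p : ℕ) (hn : 0 < n)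
    (f : (Fin n → Bool) → (Fin p → Bool) → (Fin n → Bool))
    (idx : Fin n → Fin n) (hidx : Function.Bijective idx)
    (g : ℕ → Bool → Bool)
    (hchain : ∀ (t : ℕ) (ht : t + 1 < n),
      (g t = id ∨ g t = not) ∧
      ∀ x u, f x u (idx ⟨t + 1, ht⟩) = g t (x (idx ⟨t, by omega⟩))) :
    ∀ (U : ℕ → Fin p → Bool) (x0 x0' : Fin n → Bool), x0 ≠ x0' →
      ∃ k ≤ n - 1,
        traj f U x0 k (idx ⟨n - 1, by omega⟩) ≠ traj f U x0' k (idx ⟨n - 1, by omega⟩) := by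
  intro U x0 x0' hne
  -- injectivity of each g t with t+1 < n
  have hginj : ∀ t, t + 1 < n → Function.Injective (g t) := by
    intro t ht
    rcases (hchain t ht).1 with h | h
    · rw [h]; exact fun a b h => h
    · rw [h]; intro a b hab; cases a <;> cases b <;> simp_all
  have hGcinj : ∀ s k, s + k + 1 ≤ n → Function.Injective (Gc g s k) := by
    intro s k
    induction k with
    | zero => intro _ a b h; exact h
    | succ k ih =>
      intro h
      exact Function.Injective.comp (hginj (s + k) (by omega)) (ih (by omega))
  have key : ∀ (y : Fin n → Bool) (k s : ℕ) (h : s + k + 1 ≤ n),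
      traj f U y k (idx ⟨s + k, by omega⟩) = Gc g s k (y (idx ⟨s, by omega⟩)) := by
    intro y k
    induction k with
    | zero => intro s h; rfl
    | succ k ih =>
      intro s h
      have h2 : s + k + 1 < n := by omega
      have := (hchain (s + k) h2).2 (traj f U y k) (U k)
      show f (traj f U y k) (U k) (idx ⟨s + k + 1, by omega⟩) = _
      rw [this]
      simp only [Gc]
      rw [ih s (by omega)]
      rfl
  by_contra hcon
  push_neg at hcon
  apply hne
  funext i
  obtain ⟨j, rfl⟩ := hidx.2 i
  have hs : (j : ℕ) + (n - 1 - j) + 1 ≤ n := by omega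
  have h1 := key x0 (n - 1 - j) j hs
  have h2 := key x0' (n - 1 - j) j hs
  have hk := hcon (n - 1 - j) (by omega)
  have heq : (⟨(j : ℕ) + (n - 1 - j), by omega⟩ : Fin n) = ⟨n - 1, by omega⟩ := by
    ext; simp; omega
  rw [heq] at h1 h2
  have : Gc g j (n - 1 - j) (x0 (idx ⟨j, by omega⟩)) = Gc g j (n - 1 - j) (x0' (idx ⟨j, by omega⟩)) := by
    rw [← h1, ← h2, hk]
  have := hGcinj j (n - 1 - j) hs this
  have hjj : (⟨(j : ℕ), by omega⟩ : Fin n) = j := by ext; rfl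
  rwa [hjj] at this
end

section
/- If the state variables of a BCN can be partitioned into m disjoint observed paths O^1,...,O^m, where O^i = (X_{i_1},...,X_{i_{N_i}}) with X_{i_{N_i}} directly measurable and each X_{i_{t+1}}(k+1) = g^i_t(X_{i_t}(k)) for an identity-or-negation function g^i_t, then the BCN is observable on [0, max_i N_i − 1]; in particular, every state variable's initial value is a function of the output sequence on that interval, independent of the input sequence. -/
open Function

theorem exists_common_leftInverse {ι α β : Type*} [Nonempty α] (obs : ι → α → β)
    (h : ∀ i i' a a', obs i a = obs i' a' → a = a') :
    ∃ F : β → α, ∀ i a, F (obs i a) = a := by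
  have hfac : FactorsThrough (Prod.snd : ι × α → α) (fun q => obs q.1 q.2) :=
    fun q q' hq => h _ _ _ _ hq
  exact ⟨extend _ Prod.snd fun _ => Classical.arbitrary α, fun i a => hfac.extend_apply _ (i, a)⟩

theorem injective_of_eq_id_or_eq_not {g : Bool → Bool} (hg : g = id ∨ g = not) : Injective g := by
  rcases hg with rfl | rfl
  exacts [injective_id, Bool.not_injective]

section Chain

variable {n p L : ℕ} (f : (Fin n → Bool) → (Fin p → Bool) → (Fin n → Bool))
  (v : Fin L → Fin n) (g : ℕ → Bool → Bool)

theorem eq_of_traj_chain_eq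
    (hstep : ∀ (t : ℕ) (ht : t + 1 < L) x u, f x u (v ⟨t + 1, ht⟩) = g t (x (v ⟨t, by omega⟩)))
    (hinj : ∀ t, t + 1 < L → Injective (g t))
    (U U' : ℕ → Fin p → Bool) (x0 x0' : Fin n → Bool) :
    ∀ (k t : ℕ) (h : t + k < L),
      traj f U x0 k (v ⟨t + k, h⟩) = traj f U' x0' k (v ⟨t + k, h⟩) →
        x0 (v ⟨t, by omega⟩) = x0' (v ⟨t, by omega⟩) := by
  intro k
  induction k with
  | zero => exact fun _ _ => id
  | succ k ih =>
    intro t h heq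
    have hnext : t + k + 1 < L := by omega
    rw [show (⟨t + (k + 1), h⟩ : Fin L) = ⟨t + k + 1, hnext⟩ from rfl] at heq
    simp only [traj, hstep (t + k) hnext] at heq
    exact ih t (by omega) (hinj _ hnext heq)

theorem eq_of_traj_last_eq (hL : 0 < L)
    (hstep : ∀ (t : ℕ) (ht : t + 1 < L) x u, f x u (v ⟨t + 1, ht⟩) = g t (x (v ⟨t, by omega⟩)))
    (hinj : ∀ t, t + 1 < L → Injective (g t))
    {U U' : ℕ → Fin p → Bool} {x0 x0' : Fin n → Bool} (t : Fin L)
    (heq : traj f U x0 (L - 1 - t) (v ⟨L - 1, by omega⟩) =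
      traj f U' x0' (L - 1 - t) (v ⟨L - 1, by omega⟩)) :
    x0 (v t) = x0' (v t) := by
  have hlast : (⟨L - 1, by omega⟩ : Fin L) = ⟨t + (L - 1 - t), by omega⟩ := Fin.ext (by simp only; omega)
  rw [hlast] at heq
  exact eq_of_traj_chain_eq f v g hstep hinj U U' x0 x0' _ _ _ heq

end Chain

/-- If the state variables are partitioned into m disjoint observed paths
(the map (i,t) ↦ idx i t is a bijection onto the state variables, each path ends in
a directly measurable variable, and within a path each variable updates as identity or
negation of its predecessor), then the BCN is observable on [0, max_i N_i - 1]; moreover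
the initial state is a function of the outputs on that interval, independent of the inputs. -/
theorem disjoint_observed_paths_observable (n p m : ℕ)
    (f : (Fin n → Bool) → (Fin p → Bool) → (Fin n → Bool))
    (len : Fin m → ℕ) (hlen : ∀ i, 0 < len i)
    (idx : (i : Fin m) → Fin (len i) → Fin n)
    (hpart : Function.Bijective (fun q : Σ i : Fin m, Fin (len i) => idx q.1 q.2))
    (g : Fin m → ℕ → Bool → Bool)
    (hchain : ∀ (i : Fin m) (t : ℕ) (ht : t + 1 < len i),
      (g i t = id ∨ g i t = not) ∧
      ∀ x u, f x u (idx i ⟨t + 1, ht⟩) = g i t (x (idx i ⟨t, by omega⟩))) :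
    (∀ (U : ℕ → Fin p → Bool) (x0 x0' : Fin n → Bool), x0 ≠ x0' →
      ∃ k ≤ Finset.univ.sup len - 1, ∃ i : Fin m,
        traj f U x0 k (idx i ⟨len i - 1, by have := hlen i; omega⟩) ≠
        traj f U x0' k (idx i ⟨len i - 1, by have := hlen i; omega⟩)) ∧
    (∃ F : (Fin m → ℕ → Bool) → (Fin n → Bool),
      ∀ (U : ℕ → Fin p → Bool) (x0 : Fin n → Bool),
        F (fun i k => if k ≤ Finset.univ.sup len - 1 then
            traj f U x0 k (idx i ⟨len i - 1, by have := hlen i; omega⟩) else false) = x0) := by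
  have hdet : ∀ U U' x0 x0', (∀ k ≤ Finset.univ.sup len - 1, ∀ i : Fin m,
      traj f U x0 k (idx i ⟨len i - 1, by have := hlen i; omega⟩) =
        traj f U' x0' k (idx i ⟨len i - 1, by have := hlen i; omega⟩)) → x0 = x0' := by
    intro U U' x0 x0' hobs
    funext j
    obtain ⟨⟨i, t⟩, rfl⟩ := hpart.2 j
    have hk : len i - 1 - t ≤ Finset.univ.sup len - 1 := by
      have := Finset.le_sup (f := len) (Finset.mem_univ i); omega
    exact eq_of_traj_last_eq f (idx i) (g i) (hlen i) (fun t ht => (hchain i t ht).2)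
      (fun t ht => injective_of_eq_id_or_eq_not (hchain i t ht).1) t (hobs _ hk i)
  refine ⟨fun U x0 x0' hne => ?_, exists_common_leftInverse _ fun U U' x0 x0' hobs => ?_⟩
  · by_contra! hsame
    exact hne (hdet U U x0 x0' hsame)
  · refine hdet U U' x0 x0' fun k hk i => ?_
    simpa only [if_pos hk] using congrFun (congrFun hobs i) k
end

section
/- Let G = (V, E) be a finite digraph whose vertices are partitioned into directly observable and non-directly observable nodes, satisfying: (P1) every non-directly observable node v has some node w ≠ v with in-neighborhood exactly {v}; and (P2) every cycle consisting solely of non-directly observable nodes contains a node v that is the unique in-neighbor of some node w outside the cycle. Then the vertex set of G can be partitioned into disjoint 'observed paths', where an observed path is a nonempty sequence of distinct vertices whose last vertex is directly observable, all other vertices are non-directly observable, and each non-last vertex is the unique in-neighbor of its successor in the sequence. -/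
/-- `v` points to `w`: v ≠ w and the in-neighborhood of w is exactly {v}. -/
def pointsTo {V : Type} (E : V → V → Prop) (v w : V) : Prop :=
  v ≠ w ∧ {u | E u w} = {v}

/-- An observed path: a nonempty list of distinct vertices whose last vertex is directly
observable, all other vertices are not, and each non-last vertex points to its successor. -/
def IsObservedPath {V : Type} (E : V → V → Prop) (D : Set V) (l : List V) : Prop :=
  l ≠ [] ∧ l.Nodup ∧ (∀ hl : l ≠ [], l.getLast hl ∈ D) ∧
  ∀ (t : ℕ) (ht : t + 1 < l.length),
    l.get ⟨t, by omega⟩ ∉ D ∧ pointsTo E (l.get ⟨t, by omega⟩) (l.get ⟨t + 1, ht⟩)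

namespace ObsAux

variable {V : Type}

def goodSet (E : V → V → Prop) (D : Set V) : ℕ → Set V
  | 0 => D
  | n + 1 => goodSet E D n ∪ {v | ∃ w ∈ goodSet E D n, pointsTo E v w}

open Classical in
noncomputable def trail (D : Set V) (f : V → V) (r : V → ℕ)
    (hf : ∀ v ∉ D, r (f v) < r v) (v : V) : List V :=
  if _ : v ∈ D then [v] else v :: trail D f r hf (f v)
termination_by r v
decreasing_by exact hf v ‹_›

variable {E : V → V → Prop} {D : Set V} {f : V → V} {r : V → ℕ}
  (hf : ∀ v ∉ D, r (f v) < r v)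

lemma trail_pos {v : V} (h : v ∈ D) : trail D f r hf v = [v] := by
  rw [trail, dif_pos h]

lemma trail_neg {v : V} (h : v ∉ D) : trail D f r hf v = v :: trail D f r hf (f v) := by
  rw [trail, dif_neg h]

lemma trail_ne_nil (v : V) : trail D f r hf v ≠ [] := by
  by_cases h : v ∈ D
  · rw [trail_pos hf h]; simp
  · rw [trail_neg hf h]; simp

lemma mem_trail_self (v : V) : v ∈ trail D f r hf v := by
  by_cases h : v ∈ D
  · rw [trail_pos hf h]; simp
  · rw [trail_neg hf h]; simp

lemma rank_le_of_mem : ∀ {v u : V}, u ∈ trail D f r hf v → r u ≤ r v := by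
  suffices H : ∀ n v u, r v ≤ n → u ∈ trail D f r hf v → r u ≤ r v by
    intro v u h; exact H (r v) v u le_rfl h
  intro n
  induction n with
  | zero =>
    intro v u hv hu
    by_cases h : v ∈ D
    · rw [trail_pos hf h] at hu; simp at hu; subst hu; exact le_rfl
    · exact absurd (hf v h) (by omega)
  | succ n ih =>
    intro v u hv hu
    by_cases h : v ∈ D
    · rw [trail_pos hf h] at hu; simp at hu; subst hu; exact le_rfl
    · rw [trail_neg hf h] at hu
      rcases List.mem_cons.mp hu with h1 | h1
      · subst h1; exact le_rfl
      · have hlt := hf v h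
        have := ih (f v) u (by omega) h1
        omega

lemma trail_nodup : ∀ v : V, (trail D f r hf v).Nodup := by
  suffices H : ∀ n v, r v ≤ n → (trail D f r hf v).Nodup by
    intro v; exact H (r v) v le_rfl
  intro n
  induction n with
  | zero =>
    intro v hv
    by_cases h : v ∈ D
    · rw [trail_pos hf h]; simp
    · exact absurd (hf v h) (by omega)
  | succ n ih =>
    intro v hv
    by_cases h : v ∈ D
    · rw [trail_pos hf h]; simp
    · rw [trail_neg hf h]
      have hlt := hf v h
      refine List.nodup_cons.mpr ⟨fun hmem => ?_, ih (f v) (by omega)⟩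
      have := rank_le_of_mem hf hmem
      omega

lemma trail_getLast_mem : ∀ (v : V) (h : trail D f r hf v ≠ []),
    (trail D f r hf v).getLast h ∈ D := by
  suffices H : ∀ n v, r v ≤ n → ∀ (h : trail D f r hf v ≠ []),
      (trail D f r hf v).getLast h ∈ D by
    intro v; exact H (r v) v le_rfl
  intro n
  induction n with
  | zero =>
    intro v hv h
    by_cases hd : v ∈ D
    · simp only [trail_pos hf hd]; simpa using hd
    · exact absurd (hf v hd) (by omega)
  | succ n ih =>
    intro v hv h
    by_cases hd : v ∈ D
    · simp only [trail_pos hf hd]; simpa using hd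
    · have hlt := hf v hd
      simp only [trail_neg hf hd]
      rw [List.getLast_cons (trail_ne_nil hf (f v))]
      exact ih (f v) (by omega) _

lemma trail_cons (v : V) : ∃ l, trail D f r hf v = v :: l := by
  by_cases hd : v ∈ D
  · exact ⟨[], trail_pos hf hd⟩
  · exact ⟨_, trail_neg hf hd⟩

lemma trail_get_zero (v : V) (h : 0 < (trail D f r hf v).length) :
    (trail D f r hf v).get ⟨0, h⟩ = v := by
  obtain ⟨l, hl⟩ := trail_cons hf v
  rw [List.get_eq_getElem]
  simp only [hl, List.getElem_cons_zero]

lemma trail_suffix : ∀ {v u : V}, u ∈ trail D f r hf v →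
    (trail D f r hf u) <:+ (trail D f r hf v) := by
  suffices H : ∀ n v u, r v ≤ n → u ∈ trail D f r hf v →
      (trail D f r hf u) <:+ (trail D f r hf v) by
    intro v u h; exact H (r v) v u le_rfl h
  intro n
  induction n with
  | zero =>
    intro v u hv hu
    by_cases h : v ∈ D
    · rw [trail_pos hf h] at hu; simp at hu; subst hu; exact List.suffix_refl _
    · exact absurd (hf v h) (by omega)
  | succ n ih =>
    intro v u hv hu
    by_cases h : v ∈ D
    · rw [trail_pos hf h] at hu; simp at hu; subst hu; exact List.suffix_refl _
    · rw [trail_neg hf h] at hu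
      rcases List.mem_cons.mp hu with h1 | h1
      · subst h1; exact List.suffix_refl _
      · have hlt := hf v h
        exact (ih (f v) u (by omega) h1).trans
          (by rw [trail_neg hf h]; exact List.suffix_cons _ _)

lemma mem_trail_trans {u v w : V} (hu : u ∈ trail D f r hf v)
    (hv : v ∈ trail D f r hf w) : u ∈ trail D f r hf w :=
  (trail_suffix hf hv).subset hu

lemma trail_getLast_eq_of_mem {u v : V} (hu : u ∈ trail D f r hf v) :
    (trail D f r hf u).getLast (trail_ne_nil hf u)
      = (trail D f r hf v).getLast (trail_ne_nil hf v) := by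
  obtain ⟨s, hs⟩ := trail_suffix hf hu
  have h1 : (trail D f r hf u).getLast? = (trail D f r hf v).getLast? := by
    rw [← hs, List.getLast?_append_of_ne_nil _ (trail_ne_nil hf u)]
  rw [List.getLast?_eq_getLast_of_ne_nil (trail_ne_nil hf u),
    List.getLast?_eq_getLast_of_ne_nil (trail_ne_nil hf v)] at h1
  exact Option.some.inj h1

lemma pred_exists : ∀ {v u : V}, u ∈ trail D f r hf v → u ≠ v →
    ∃ p, p ∈ trail D f r hf v ∧ p ∉ D ∧ f p = u := by
  suffices H : ∀ n v u, r v ≤ n → u ∈ trail D f r hf v → u ≠ v →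
      ∃ p, p ∈ trail D f r hf v ∧ p ∉ D ∧ f p = u by
    intro v u h hne; exact H (r v) v u le_rfl h hne
  intro n
  induction n with
  | zero =>
    intro v u hv hu hne
    by_cases h : v ∈ D
    · rw [trail_pos hf h] at hu; simp at hu; exact absurd hu hne
    · exact absurd (hf v h) (by omega)
  | succ n ih =>
    intro v u hv hu hne
    by_cases h : v ∈ D
    · rw [trail_pos hf h] at hu; simp at hu; exact absurd hu hne
    · rw [trail_neg hf h] at hu
      rcases List.mem_cons.mp hu with h1 | h1
      · exact absurd h1 hne
      · have hlt := hf v h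
        by_cases h2 : u = f v
        · exact ⟨v, mem_trail_self hf v, h, h2.symm⟩
        · obtain ⟨p, hp1, hp2, hp3⟩ := ih (f v) u (by omega) h1 h2
          exact ⟨p, by rw [trail_neg hf h]; exact List.mem_cons_of_mem _ hp1, hp2, hp3⟩

lemma trail_isObserved (hpt : ∀ v ∉ D, pointsTo E v (f v)) :
    ∀ v : V, IsObservedPath E D (trail D f r hf v) := by
  suffices H : ∀ n v, r v ≤ n → IsObservedPath E D (trail D f r hf v) by
    intro v; exact H (r v) v le_rfl
  intro n
  induction n with
  | zero =>
    intro v hv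
    by_cases h : v ∈ D
    · rw [trail_pos hf h]
      refine ⟨by simp, by simp, fun _ => by simpa using h, fun t ht => by simp at ht⟩
    · exact absurd (hf v h) (by omega)
  | succ n ih =>
    intro v hv
    by_cases h : v ∈ D
    · rw [trail_pos hf h]
      refine ⟨by simp, by simp, fun _ => by simpa using h, fun t ht => by simp at ht⟩
    · have hlt := hf v h
      obtain ⟨ih1, ih2, ih3, ih4⟩ := ih (f v) (by omega)
      rw [trail_neg hf h]
      refine ⟨by simp, ?_, ?_, ?_⟩
      · refine List.nodup_cons.mpr ⟨fun hmem => ?_, trail_nodup hf (f v)⟩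
        have := rank_le_of_mem hf hmem
        omega
      · intro hl
        rw [List.getLast_cons (trail_ne_nil hf (f v))]
        exact ih3 _
      · intro t ht
        match t with
        | 0 =>
          constructor
          · simpa using h
          · have h1 : 0 < (trail D f r hf (f v)).length :=
              List.length_pos_iff.mpr (trail_ne_nil hf (f v))
            have : (v :: trail D f r hf (f v)).get ⟨1, ht⟩
                = (trail D f r hf (f v)).get ⟨0, h1⟩ := rfl
            rw [this, trail_get_zero hf (f v) h1]
            simpa using hpt v h
        | t + 1 =>
          have ht' : t + 1 < (trail D f r hf (f v)).length := by
            simpa [Nat.succ_lt_succ_iff] using ht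
          have h4 := ih4 t ht'
          exact h4

open Classical in
noncomputable def upf (D : Set V) (f : V → V) (v : V) : V :=
  if h : ∃ u, u ∉ D ∧ f u = v then h.choose else v

lemma pred_unique (hpt : ∀ v ∉ D, pointsTo E v (f v)) {p q : V}
    (hp : p ∉ D) (hq : q ∉ D) (h : f p = f q) : p = q := by
  have h1 := (hpt p hp).2
  have h2 := (hpt q hq).2
  rw [h] at h1
  rw [h1] at h2
  exact Set.singleton_eq_singleton_iff.mp h2

lemma upf_eq (hpt : ∀ v ∉ D, pointsTo E v (f v)) {p v : V}
    (hp : p ∉ D) (hfp : f p = v) : upf D f v = p := by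
  have hex : ∃ u, u ∉ D ∧ f u = v := ⟨p, hp, hfp⟩
  rw [upf, dif_pos hex]
  obtain ⟨h1, h2⟩ := hex.choose_spec
  exact pred_unique hpt h1 hp (h2.trans hfp.symm)

lemma upf_spec (v : V) : upf D f v = v ∨ (upf D f v ∉ D ∧ f (upf D f v) = v) := by
  rw [upf]
  split_ifs with h
  · exact Or.inr h.choose_spec
  · exact Or.inl rfl

lemma mem_trail_upf (v : V) : v ∈ trail D f r hf (upf D f v) := by
  rcases upf_spec (f := f) (D := D) v with h | ⟨h1, h2⟩
  · rw [h]; exact mem_trail_self hf v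
  · rw [trail_neg hf h1, h2]
    exact List.mem_cons_of_mem _ (mem_trail_self hf v)

include hf in
lemma r_lt_upf (v : V) (h : upf D f v ≠ v) : r v < r (upf D f v) := by
  rcases upf_spec (f := f) (D := D) v with h1 | ⟨h1, h2⟩
  · exact absurd h1 h
  · have := hf _ h1
    rw [h2] at this
    exact this

lemma mem_trail_upf_iter (v : V) (k : ℕ) : v ∈ trail D f r hf ((upf D f)^[k] v) := by
  induction k with
  | zero => exact mem_trail_self hf v
  | succ k ih =>
    rw [Function.iterate_succ_apply']
    exact mem_trail_trans hf ih (mem_trail_upf hf _)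

include hf in
lemma upf_iter_grow (v : V) : ∀ k : ℕ,
    (upf D f)^[k + 1] v = (upf D f)^[k] v ∨ r v + k ≤ r ((upf D f)^[k] v) := by
  intro k
  induction k with
  | zero => exact Or.inr (by simp)
  | succ k ih =>
    rcases ih with h | h
    · left
      simp only [Function.iterate_succ_apply'] at h ⊢
      rw [h]
      exact h
    · by_cases h2 : upf D f ((upf D f)^[k] v) = (upf D f)^[k] v
      · left
        simp only [Function.iterate_succ_apply']
        rw [h2]
        exact h2
      · right
        rw [Function.iterate_succ_apply']
        have := r_lt_upf hf ((upf D f)^[k] v) h2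
        omega

/-- the key climbing lemma -/
lemma upf_iter_of_mem (hpt : ∀ v ∉ D, pointsTo E v (f v)) {z : V}
    (hz : upf D f z = z) {u : V} (hu : u ∈ trail D f r hf z) : ∀ k : ℕ,
    (upf D f)^[k] u = z ∨
      ((upf D f)^[k] u ∈ trail D f r hf z ∧ r u + k ≤ r ((upf D f)^[k] u)) := by
  have step : ∀ x, x ∈ trail D f r hf z → x ≠ z →
      upf D f x ∈ trail D f r hf z ∧ r x < r (upf D f x) := by
    intro x hx hxz
    obtain ⟨p, hp1, hp2, hp3⟩ := pred_exists hf hx hxz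
    have hup : upf D f x = p := upf_eq hpt hp2 hp3
    refine ⟨hup ▸ hp1, ?_⟩
    rw [hup, ← hp3]
    exact hf p hp2
  intro k
  induction k with
  | zero => exact Or.inr ⟨by simpa using hu, by simp⟩
  | succ k ih =>
    rcases ih with h | ⟨h1, h2⟩
    · left; rw [Function.iterate_succ_apply', h, hz]
    · by_cases h3 : (upf D f)^[k] u = z
      · left; rw [Function.iterate_succ_apply', h3, hz]
      · right
        obtain ⟨s1, s2⟩ := step _ h1 h3
        rw [Function.iterate_succ_apply']
        exact ⟨s1, by omega⟩

variable [Fintype V]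

include hf in
lemma upf_head_fixed (v : V) :
    upf D f ((upf D f)^[Finset.univ.sup r + 1] v) = (upf D f)^[Finset.univ.sup r + 1] v := by
  set K := Finset.univ.sup r + 1 with hK
  rcases upf_iter_grow hf v K with h | h
  · rw [Function.iterate_succ_apply'] at h; exact h
  · exfalso
    have : r ((upf D f)^[K] v) ≤ Finset.univ.sup r := Finset.le_sup (Finset.mem_univ _)
    omega

lemma upf_head_eq (hpt : ∀ v ∉ D, pointsTo E v (f v)) {z : V}
    (hz : upf D f z = z) {u : V} (hu : u ∈ trail D f r hf z) :
    (upf D f)^[Finset.univ.sup r + 1] u = z := by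
  set K := Finset.univ.sup r + 1 with hK
  rcases upf_iter_of_mem hf hpt hz hu K with h | ⟨h1, h2⟩
  · exact h
  · exfalso
    have : r ((upf D f)^[K] u) ≤ Finset.univ.sup r := Finset.le_sup (Finset.mem_univ _)
    omega

lemma goodSet_cover {E : V → V → Prop} {D : Set V} [Fintype V]
    (hP1 : ∀ v ∉ D, ∃ w, w ≠ v ∧ {u | E u w} = {v})
    (hP2 : ∀ (ℓ : ℕ) (c : Fin (ℓ + 1) → V), Function.Injective c →
      (∀ t, c t ∉ D) → (∀ t, E (c t) (c (t + 1))) →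
      ∃ t, ∃ w, w ∉ Set.range c ∧ {u | E u w} = {c t})
    (v : V) : ∃ n, v ∈ goodSet E D n := by
  by_contra hc
  set B : Set V := {x | ∀ n, x ∉ goodSet E D n} with hB
  have hvB : v ∈ B := fun n hn => hc ⟨n, hn⟩
  have hBD : ∀ x ∈ B, x ∉ D := fun x hx => hx 0
  have hBstep : ∀ x ∈ B, ∀ w, pointsTo E x w → w ∈ B := by
    intro x hx w hpt n hn
    exact hx (n + 1) (Or.inr ⟨w, hn, hpt⟩)
  have hg : ∀ x : B, ∃ w : B, pointsTo E x.1 w.1 := by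
    rintro ⟨x, hx⟩
    obtain ⟨w, hw1, hw2⟩ := hP1 x (hBD x hx)
    have hpt : pointsTo E x w := ⟨fun h => hw1 h.symm, hw2⟩
    exact ⟨⟨w, hBstep x hx w hpt⟩, hpt⟩
  choose g hgp using hg
  have hginj : Function.Injective g := by
    intro a b hab
    have h1 := (hgp a).2
    have h2 := (hgp b).2
    rw [hab] at h1
    rw [h1] at h2
    exact Subtype.ext (Set.singleton_eq_singleton_iff.mp h2)
  have hfin : Finite B := Subtype.finite
  have hgbij : Function.Bijective g := (Finite.injective_iff_bijective).mp hginj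
  -- v₀ is a periodic point of g
  set v₀ : B := ⟨v, hvB⟩ with hv₀
  have hper : ∃ m, 0 < m ∧ g^[m] v₀ = v₀ := by
    haveI : Finite (Equiv.Perm B) := by infer_instance
    set e : Equiv.Perm B := Equiv.ofBijective g hgbij with he
    refine ⟨orderOf e, orderOf_pos e, ?_⟩
    have hge : g = ⇑e := rfl
    rw [hge, Equiv.Perm.iterate_eq_pow, pow_orderOf_eq_one e]
    rfl
  obtain ⟨m0, hm0, hm0per⟩ := hper
  have hvper : v₀ ∈ Function.periodicPts g :=
    Function.mk_mem_periodicPts hm0 hm0per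
  set m := Function.minimalPeriod g v₀ with hm
  have hmpos : 0 < m := Function.minimalPeriod_pos_of_mem_periodicPts hvper
  obtain ⟨ℓ, hℓ⟩ : ∃ ℓ, m = ℓ + 1 := ⟨m - 1, by omega⟩
  set c : Fin (ℓ + 1) → V := fun t => ((g^[t.1] v₀ : B) : V) with hcdef
  have hcB : ∀ t, (c t) ∈ B := fun t => (g^[t.1] v₀).2
  have hcsucc : ∀ t : Fin (ℓ + 1), c (t + 1) = ((g (g^[t.1] v₀) : B) : V) := by
    intro t
    have hval : ((t + 1 : Fin (ℓ + 1))).1 = (t.1 + 1) % (ℓ + 1) := by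
      rw [Fin.add_def]
      simp [Nat.add_mod]
    by_cases h : t.1 + 1 < ℓ + 1
    · have : ((t + 1 : Fin (ℓ + 1))).1 = t.1 + 1 := by
        rw [hval, Nat.mod_eq_of_lt h]
      simp only [hcdef, this, Function.iterate_succ_apply']
    · have ht : t.1 = ℓ := by have := t.2; omega
      have : ((t + 1 : Fin (ℓ + 1))).1 = 0 := by
        rw [hval, ht]
        simp
      simp only [hcdef, this, Function.iterate_zero_apply]
      have : g (g^[t.1] v₀) = g^[m] v₀ := by
        rw [ht, hℓ]
        exact (Function.iterate_succ_apply' g ℓ v₀).symm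
      rw [this, Function.iterate_minimalPeriod]
  have hcinj : Function.Injective c := by
    intro t1 t2 h
    have h2 : g^[t1.1] v₀ = g^[t2.1] v₀ := Subtype.ext h
    have := Function.iterate_injOn_Iio_minimalPeriod (f := g) (x := v₀)
      (by rw [← hm, hℓ]; exact Set.mem_Iio.mpr t1.2)
      (by rw [← hm, hℓ]; exact Set.mem_Iio.mpr t2.2) h2
    exact Fin.ext this
  have hcD : ∀ t, c t ∉ D := fun t => hBD _ (hcB t)
  have hcE : ∀ t, E (c t) (c (t + 1)) := by
    intro t
    rw [hcsucc t]
    have hpt := hgp (g^[t.1] v₀)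
    have := hpt.2
    show (c t) ∈ {u | E u ((g (g^[t.1] v₀) : B) : V)}
    rw [this]
    rfl
  obtain ⟨t, w, hwr, hw⟩ := hP2 ℓ c hcinj hcD hcE
  have hne : c t ≠ w := fun h => hwr (h ▸ Set.mem_range_self t)
  have hptw : pointsTo E (c t) w := ⟨hne, hw⟩
  by_cases hwg : ∃ n, w ∈ goodSet E D n
  · obtain ⟨n, hn⟩ := hwg
    exact hcB t (n + 1) (Or.inr ⟨w, hn, hptw⟩)
  · have hwB : w ∈ B := fun n hn => hwg ⟨n, hn⟩
    obtain ⟨u, hu⟩ := hgbij.2 ⟨w, hwB⟩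
    have hptu := hgp u
    rw [hu] at hptu
    have h1 : (u : V) = c t := by
      have h2 := hptu.2
      rw [hw] at h2
      exact (Set.singleton_eq_singleton_iff.mp h2).symm
    have h3 : u = g^[t.1] v₀ := Subtype.ext h1
    have h4 : w = c (t + 1) := by
      rw [hcsucc t, ← h3, hu]
    exact hwr (h4 ▸ Set.mem_range_self (t + 1))

end ObsAux

/-- If a finite digraph with directly observable nodes D satisfies P1 and P2,
then its vertex set can be partitioned into disjoint observed paths. -/
theorem partition_into_observed_paths (V : Type) [Fintype V]
    (E : V → V → Prop) (D : Set V)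
    (hP1 : ∀ v ∉ D, ∃ w, w ≠ v ∧ {u | E u w} = {v})
    (hP2 : ∀ (ℓ : ℕ) (c : Fin (ℓ + 1) → V), Function.Injective c →
      (∀ t, c t ∉ D) → (∀ t, E (c t) (c (t + 1))) →
      ∃ t, ∃ w, w ∉ Set.range c ∧ {u | E u w} = {c t}) :
    ∃ (M : ℕ) (path : Fin M → List V),
      (∀ i, IsObservedPath E D (path i)) ∧ ∀ v : V, ∃! i, v ∈ path i := by
  classical
  have cov : ∀ v : V, ∃ n, v ∈ ObsAux.goodSet E D n := ObsAux.goodSet_cover hP1 hP2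
  obtain ⟨r, hrspec, hrmin⟩ : ∃ r : V → ℕ, (∀ v, v ∈ ObsAux.goodSet E D (r v)) ∧
      (∀ w n, w ∈ ObsAux.goodSet E D n → r w ≤ n) :=
    ⟨fun v => Nat.find (cov v), fun v => Nat.find_spec (cov v),
      fun w n hw => Nat.find_min' (cov w) hw⟩
  have hex : ∀ v, ∃ w, v ∉ D → pointsTo E v w ∧ r w < r v := by
    intro v
    by_cases h : v ∈ D
    · exact ⟨v, fun hv => absurd h hv⟩
    · have h0 : r v ≠ 0 := by
        intro h0
        have hsp := hrspec v
        rw [h0] at hsp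
        exact h hsp
      obtain ⟨n, hn⟩ : ∃ n, r v = n + 1 := ⟨r v - 1, by omega⟩
      have h1 := hrspec v
      rw [hn] at h1
      rcases h1 with h1 | ⟨w, hw1, hw2⟩
      · have := hrmin v n h1; omega
      · refine ⟨w, fun _ => ⟨hw2, ?_⟩⟩
        have := hrmin w n hw1
        omega
  choose f hfspec using hex
  have hpt : ∀ v ∉ D, pointsTo E v (f v) := fun v hv => (hfspec v hv).1
  have hf : ∀ v ∉ D, r (f v) < r v := fun v hv => (hfspec v hv).2
  letI : Fintype ↥D := Fintype.ofFinite ↥D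
  refine ⟨Fintype.card ↥D, fun i => ObsAux.trail D f r hf
    ((ObsAux.upf D f)^[Finset.univ.sup r + 1]
      (((Fintype.equivFin ↥D).symm i : ↥D) : V)), fun i => ObsAux.trail_isObserved hf hpt _, ?_⟩
  intro v
  have hdD : (ObsAux.trail D f r hf v).getLast (ObsAux.trail_ne_nil hf v) ∈ D :=
    ObsAux.trail_getLast_mem hf v _
  set d : V := (ObsAux.trail D f r hf v).getLast (ObsAux.trail_ne_nil hf v) with hd
  refine ⟨Fintype.equivFin ↥D ⟨d, hdD⟩, ?_, ?_⟩
  · simp only [Equiv.symm_apply_apply]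
    have hz : ObsAux.upf D f ((ObsAux.upf D f)^[Finset.univ.sup r + 1] v)
        = (ObsAux.upf D f)^[Finset.univ.sup r + 1] v := ObsAux.upf_head_fixed hf v
    have hvz : v ∈ ObsAux.trail D f r hf ((ObsAux.upf D f)^[Finset.univ.sup r + 1] v) :=
      ObsAux.mem_trail_upf_iter hf v _
    have hdv : d ∈ ObsAux.trail D f r hf v := by rw [hd]; exact List.getLast_mem _
    have hdz : d ∈ ObsAux.trail D f r hf ((ObsAux.upf D f)^[Finset.univ.sup r + 1] v) :=
      ObsAux.mem_trail_trans hf hdv hvz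
    have heq : (ObsAux.upf D f)^[Finset.univ.sup r + 1] d
        = (ObsAux.upf D f)^[Finset.univ.sup r + 1] v := ObsAux.upf_head_eq hf hpt hz hdz
    show v ∈ ObsAux.trail D f r hf ((ObsAux.upf D f)^[Finset.univ.sup r + 1] d)
    rw [heq]
    exact hvz
  · intro j hj
    set d' : ↥D := (Fintype.equivFin ↥D).symm j with hd'
    have h1 := ObsAux.trail_getLast_eq_of_mem hf hj
    have h2 : (d' : V) ∈ ObsAux.trail D f r hf
        ((ObsAux.upf D f)^[Finset.univ.sup r + 1] (d' : V)) :=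
      ObsAux.mem_trail_upf_iter hf _ _
    have h3 := ObsAux.trail_getLast_eq_of_mem hf h2
    have h4 : ObsAux.trail D f r hf (d' : V) = [(d' : V)] := ObsAux.trail_pos hf d'.2
    have h5 : (ObsAux.trail D f r hf (d' : V)).getLast (ObsAux.trail_ne_nil hf _)
        = (d' : V) := by simp only [h4, List.getLast_singleton]
    have h6 : d = (d' : V) := by
      rw [hd]
      rw [h1, ← h3, h5]
    have h7 : (⟨d, hdD⟩ : ↥D) = d' := Subtype.ext h6
    rw [h7, hd', Equiv.apply_symm_apply]
end

section
/- Consider a BCN whose dependency graph satisfies properties P1 and P2 (with respect to its directly observable state variables). Then the BCN is observable: there exists N ≥ 0 such that for every input sequence, distinct initial states yield distinct output sequences on [0,N]. Moreover N can be taken as (the length of the longest observed path in a partition of the state-variable nodes into disjoint observed paths) minus 1, which is at most n − 1. -/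
/-- f_j depends essentially on state variable X_i. -/
def dependsState {n p : ℕ} (f : (Fin n → Bool) → (Fin p → Bool) → (Fin n → Bool))
    (i j : Fin n) : Prop :=
  ∃ x u, f (Function.update x i (!x i)) u j ≠ f x u j

/-- f_j depends essentially on input U_q. -/
def dependsInput {n p : ℕ} (f : (Fin n → Bool) → (Fin p → Bool) → (Fin n → Bool))
    (q : Fin p) (j : Fin n) : Prop :=
  ∃ x u, f x (Function.update u q (!u q)) j ≠ f x u j

/-- In-neighborhood of state node j in the dependency graph (vertices are state
variables `Sum.inl i` and inputs `Sum.inr q`). -/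
def Nin {n p : ℕ} (f : (Fin n → Bool) → (Fin p → Bool) → (Fin n → Bool))
    (j : Fin n) : Set (Sum (Fin n) (Fin p)) :=
  {v | Sum.elim (fun i => dependsState f i j) (fun q => dependsInput f q j) v}


lemma determined {α : Type*} [Fintype α] [DecidableEq α]
    (h : (α → Bool) → Bool) (i : α)
    (hflip : ∀ v, v ≠ i → ∀ z, h (Function.update z v (!z v)) = h z) :
    ∀ z z', z i = z' i → h z = h z' := by
  suffices H : ∀ (d : ℕ) (z z' : α → Bool),
      (Finset.univ.filter (fun v => z v ≠ z' v)).card = d → z i = z' i → h z = h z' by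
    intro z z' hi; exact H _ z z' rfl hi
  intro d
  induction d with
  | zero =>
    intro z z' hc _
    have : z = z' := by
      funext v
      by_contra hv
      have : v ∈ Finset.univ.filter (fun v => z v ≠ z' v) := by simp [hv]
      rw [Finset.card_eq_zero] at hc
      simp [hc] at this
    rw [this]
  | succ d ih =>
    intro z z' hc hi
    have hne : (Finset.univ.filter (fun v => z v ≠ z' v)).Nonempty := by
      rw [← Finset.card_pos, hc]; omega
    obtain ⟨v, hv⟩ := hne
    simp only [Finset.mem_filter] at hv
    have hvne : z v ≠ z' v := hv.2
    have hvi : v ≠ i := by rintro rfl; exact hvne hi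
    have hzv : z' v = !z v := by
      cases hb : z v <;> cases hb' : z' v <;> simp_all
    set z₂ := Function.update z v (!z v) with hz₂
    have h1 : h z₂ = h z := hflip v hvi z
    have h2 : z₂ i = z' i := by
      rw [hz₂, Function.update_of_ne (Ne.symm hvi)]
      exact hi
    have hcard : (Finset.univ.filter (fun w => z₂ w ≠ z' w)).card = d := by
      have : Finset.univ.filter (fun w => z₂ w ≠ z' w)
          = (Finset.univ.filter (fun w => z w ≠ z' w)).erase v := by
        ext w
        simp only [Finset.mem_filter, Finset.mem_erase, Finset.mem_univ, true_and]
        constructor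
        · intro hw
          have hwv : w ≠ v := by
            rintro rfl
            rw [hz₂] at hw; simp [Function.update_self, hzv] at hw
          refine ⟨hwv, ?_⟩
          rwa [hz₂, Function.update_of_ne hwv] at hw
        · rintro ⟨hwv, hw⟩
          rwa [hz₂, Function.update_of_ne hwv]
      rw [this, Finset.card_erase_of_mem (by simp [hv.2]), hc]
      omega
    rw [← h1]
    exact ih z₂ z' hcard h2

lemma local_of_Nin {n p : ℕ} (f : (Fin n → Bool) → (Fin p → Bool) → (Fin n → Bool))
    (i j : Fin n) (h : Nin f j = {Sum.inl i}) :
    ∃ g : Bool → Bool, g false ≠ g true ∧ ∀ x u, f x u j = g (x i) := by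
  set H : (Sum (Fin n) (Fin p) → Bool) → Bool :=
    fun z => f (fun a => z (Sum.inl a)) (fun b => z (Sum.inr b)) j with hH
  have hflip : ∀ v, v ≠ Sum.inl i → ∀ z, H (Function.update z v (!z v)) = H z := by
    intro v hvi z
    match v with
    | Sum.inl i' =>
      have hi' : i' ≠ i := fun he => hvi (by rw [he])
      have hnd : ¬ dependsState f i' j := by
        intro hd
        have : Sum.inl i' ∈ Nin f j := hd
        rw [h] at this
        simp at this
        exact hi' this
      have hx : ∀ x u, f (Function.update x i' (!x i')) u j = f x u j := by
        intro x u
        by_contra hne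
        exact hnd ⟨x, u, hne⟩
      have e1 : (fun a => Function.update z (Sum.inl i') (!z (Sum.inl i')) (Sum.inl a))
          = Function.update (fun a => z (Sum.inl a)) i' (!z (Sum.inl i')) := by
        funext a
        by_cases ha : a = i'
        · subst ha; simp
        · rw [Function.update_of_ne (fun he => ha (Sum.inl.inj he)),
            Function.update_of_ne ha]
      have e2 : (fun b => Function.update z (Sum.inl i') (!z (Sum.inl i')) (Sum.inr b))
          = fun b => z (Sum.inr b) := by
        funext b
        rw [Function.update_of_ne (by simp)]
      rw [hH]
      simp only [e1, e2]
      exact hx _ _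
    | Sum.inr q =>
      have hnd : ¬ dependsInput f q j := by
        intro hd
        have : Sum.inr q ∈ Nin f j := hd
        rw [h] at this
        simp at this
      have hx : ∀ x u, f x (Function.update u q (!u q)) j = f x u j := by
        intro x u
        by_contra hne
        exact hnd ⟨x, u, hne⟩
      have e1 : (fun a => Function.update z (Sum.inr q) (!z (Sum.inr q)) (Sum.inl a))
          = fun a => z (Sum.inl a) := by
        funext a; rw [Function.update_of_ne (by simp)]
      have e2 : (fun b => Function.update z (Sum.inr q) (!z (Sum.inr q)) (Sum.inr b))
          = Function.update (fun b => z (Sum.inr b)) q (!z (Sum.inr q)) := by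
        funext b
        by_cases hb : b = q
        · subst hb; simp
        · rw [Function.update_of_ne (fun he => hb (Sum.inr.inj he)),
            Function.update_of_ne hb]
      rw [hH]
      simp only [e1, e2]
      exact hx _ _
  have hdet := determined H (Sum.inl i) hflip
  refine ⟨fun b => H (fun _ => b), ?_, ?_⟩
  · have hd : dependsState f i j := by
      have : Sum.inl i ∈ Nin f j := by rw [h]; rfl
      exact this
    obtain ⟨x, u, hne⟩ := hd
    have v1 : f x u j = H (fun _ => x i) := by
      have := hdet (Sum.elim x u) (fun _ => x i) rfl
      exact this
    have v2 : f (Function.update x i (!x i)) u j = H (fun _ => !x i) := by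
      have := hdet (Sum.elim (Function.update x i (!x i)) u) (fun _ => !x i) (by simp)
      exact this
    rw [v1, v2] at hne
    cases hb : x i
    · rw [hb] at hne; simp at hne; exact fun he => hne he.symm
    · rw [hb] at hne; simpa using hne
  · intro x u
    exact hdet (Sum.elim x u) (fun _ => x i) rfl

open scoped Classical in
noncomputable def Aset (n p m : ℕ)
    (f : (Fin n → Bool) → (Fin p → Bool) → (Fin n → Bool)) : ℕ → Finset (Fin n)
  | 0 => Finset.univ.filter fun i => i.val < m
  | k + 1 => Aset n p m f k ∪
      (Finset.univ.filter fun i => ∃ j ∈ Aset n p m f k, Nin f j = {Sum.inl i})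


lemma Aset_zero_subset (n p m : ℕ)
    (f : (Fin n → Bool) → (Fin p → Bool) → (Fin n → Bool)) :
    ∀ k, Aset n p m f 0 ⊆ Aset n p m f k := by
  intro k
  induction k with
  | zero => exact subset_rfl
  | succ k ih =>
    refine ih.trans ?_
    show Aset n p m f k ⊆ Aset n p m f k ∪ _
    exact Finset.subset_union_left

lemma Aset_stable_univ (n p m : ℕ)
    (f : (Fin n → Bool) → (Fin p → Bool) → (Fin n → Bool))
    (hP1 : ∀ i : Fin n, m ≤ i.val →
      ∃ j : Fin n, j ≠ i ∧ Nin f j = {Sum.inl i})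
    (hP2 : ∀ (ℓ : ℕ) (c : Fin (ℓ + 1) → Fin n), Function.Injective c →
      (∀ t, m ≤ (c t).val) → (∀ t, dependsState f (c t) (c (t + 1))) →
      ∃ (t : Fin (ℓ + 1)) (j : Fin n), (∀ s, c s ≠ j) ∧ Nin f j = {Sum.inl (c t)})
    (k : ℕ) (hst : Aset n p m f (k + 1) = Aset n p m f k) :
    Aset n p m f k = Finset.univ := by
  classical
  by_contra hne
  set A := Aset n p m f k with hA
  set B := Finset.univ \ A with hB
  have hBmem : ∀ i : Fin n, i ∈ B ↔ i ∉ A := by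
    intro i; rw [hB]; simp
  have hBne : B.Nonempty := by
    rw [hB, Finset.sdiff_nonempty]
    intro hsub
    exact hne (Finset.univ_subset_iff.mp hsub)
  have hBm : ∀ i ∈ B, m ≤ i.val := by
    intro i hi
    by_contra hlt
    push_neg at hlt
    have h0 : i ∈ Aset n p m f 0 := by
      simp [Aset, hlt]
    exact (hBmem i).mp hi (Aset_zero_subset n p m f k h0)
  have hclose : ∀ i ∈ B, ∀ j : Fin n, Nin f j = {Sum.inl i} → j ∈ B := by
    intro i hi j hj
    rw [hBmem]
    intro hjA
    have hik : i ∈ Aset n p m f (k + 1) := by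
      show i ∈ Aset n p m f k ∪ _
      apply Finset.mem_union_right
      simp only [Finset.mem_filter, Finset.mem_univ, true_and]
      exact ⟨j, hjA, hj⟩
    rw [hst] at hik
    exact (hBmem i).mp hi hik
  have hτex : ∀ i ∈ B, ∃ j : Fin n, Nin f j = {Sum.inl i} := by
    intro i hi
    obtain ⟨j, _, hj⟩ := hP1 i (hBm i hi)
    exact ⟨j, hj⟩
  set τ : Fin n → Fin n := fun i =>
    if h : ∃ j : Fin n, Nin f j = {Sum.inl i} then h.choose else i with hτdef
  have hτ : ∀ i ∈ B, Nin f (τ i) = {Sum.inl i} := by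
    intro i hi
    have h := hτex i hi
    rw [hτdef]
    simp only [dif_pos h]
    exact h.choose_spec
  have hτB : ∀ i ∈ B, τ i ∈ B := fun i hi => hclose i hi (τ i) (hτ i hi)
  obtain ⟨i₀, hi₀⟩ := hBne
  have hiter : ∀ a : ℕ, τ^[a] i₀ ∈ B := by
    intro a
    induction a with
    | zero => simpa using hi₀
    | succ a ih =>
      rw [Function.iterate_succ_apply']
      exact hτB _ ih
  have hpig : ∃ a ∈ Finset.range (B.card + 1), ∃ b ∈ Finset.range (B.card + 1),
      a ≠ b ∧ τ^[a] i₀ = τ^[b] i₀ :=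
    Finset.exists_ne_map_eq_of_card_lt_of_maps_to
      (by rw [Finset.card_range]; omega) (fun a _ => hiter a)
  obtain ⟨a, -, b, -, hab, heq⟩ := hpig
  have hper : ∃ d, 0 < d ∧ τ^[d] (τ^[min a b] i₀) = τ^[min a b] i₀ := by
    rcases lt_or_gt_of_ne hab with h | h
    · refine ⟨b - a, by omega, ?_⟩
      rw [min_eq_left h.le, ← Function.iterate_add_apply, Nat.sub_add_cancel h.le]
      exact heq.symm
    · refine ⟨a - b, by omega, ?_⟩
      rw [min_eq_right h.le, ← Function.iterate_add_apply, Nat.sub_add_cancel h.le]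
      exact heq
  set x := τ^[min a b] i₀ with hx
  have hxiterB : ∀ d : ℕ, τ^[d] x ∈ B := by
    intro d
    rw [hx, ← Function.iterate_add_apply]
    exact hiter _
  have hspec := Nat.find_spec hper
  set L := Nat.find hper with hL
  obtain ⟨hLpos, hLper⟩ := hspec
  have hLmin : ∀ d, 0 < d → d < L → τ^[d] x ≠ x := by
    intro d hd hdL hcon
    exact Nat.find_min hper (hL ▸ hdL) ⟨hd, hcon⟩
  set ℓ := L - 1 with hℓ
  have hℓL : ℓ + 1 = L := by omega
  set c : Fin (ℓ + 1) → Fin n := fun t => τ^[t.val] x with hc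
  have hcB : ∀ t, c t ∈ B := fun t => hxiterB _
  have hcinj : Function.Injective c := by
    have key : ∀ s t : ℕ, s < t → t < L → τ^[s] x ≠ τ^[t] x := by
      intro s t hst' htL hcon
      have h1 : τ^[L - t] (τ^[t] x) = x := by
        rw [← Function.iterate_add_apply, Nat.sub_add_cancel htL.le]
        exact hLper
      have h2 : τ^[L - t + s] x = x := by
        rw [Function.iterate_add_apply, hcon]
        exact h1
      exact hLmin (L - t + s) (by omega) (by omega) h2
    intro s t hst'
    by_contra hne'
    have hsv : s.val < L := by have := s.isLt; omega
    have htv : t.val < L := by have := t.isLt; omega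
    rcases lt_trichotomy s.val t.val with h | h | h
    · exact key s.val t.val h htv hst'
    · exact hne' (Fin.ext h)
    · exact key t.val s.val h hsv hst'.symm
  have hsucc : ∀ t : Fin (ℓ + 1), c (t + 1) = τ (c t) := by
    intro t
    have hstep : τ (c t) = τ^[t.val + 1] x := (Function.iterate_succ_apply' τ t.val x).symm
    have hval : ((t + 1 : Fin (ℓ + 1))).val = (t.val + 1) % (ℓ + 1) := by
      simp [Fin.add_def]
    by_cases ht : t.val = ℓ
    · have h0 : ((t + 1 : Fin (ℓ + 1))).val = 0 := by
        rw [hval, ht]; simp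
      have hcx : c (t + 1) = x := by
        show τ^[((t + 1 : Fin (ℓ + 1))).val] x = x
        rw [h0]
        rfl
      rw [hcx, hstep, ht, hℓL]
      exact hLper.symm
    · have hlt : t.val < ℓ := by have := t.isLt; omega
      have h1 : ((t + 1 : Fin (ℓ + 1))).val = t.val + 1 := by
        rw [hval]; exact Nat.mod_eq_of_lt (by omega)
      show τ^[((t + 1 : Fin (ℓ + 1))).val] x = τ (c t)
      rw [h1, hstep]
  have hdep : ∀ t : Fin (ℓ + 1), dependsState f (c t) (c (t + 1)) := by
    intro t
    rw [hsucc t]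
    have hmem : Sum.inl (c t) ∈ Nin f (τ (c t)) := by
      rw [hτ (c t) (hcB t)]; rfl
    exact hmem
  obtain ⟨t, j, hjoff, hNj⟩ := hP2 ℓ c hcinj (fun t => hBm _ (hcB t)) hdep
  set D : Fin n → Finset (Fin n) :=
    fun i => B.filter (fun j => Nin f j = {Sum.inl i}) with hD
  have hDdisj : (B : Set (Fin n)).PairwiseDisjoint D := by
    intro i₁ h₁ i₂ h₂ h12
    simp only [Finset.disjoint_left, hD, Finset.mem_filter]
    rintro j' ⟨-, hj1⟩ ⟨-, hj2⟩
    rw [hj1, Set.singleton_eq_singleton_iff] at hj2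
    exact h12 (Sum.inl.inj hj2)
  have hDsub : B.biUnion D ⊆ B := by
    intro j' hj'
    simp only [Finset.mem_biUnion, hD, Finset.mem_filter] at hj'
    obtain ⟨i, -, hjB, -⟩ := hj'
    exact hjB
  have hsum_le : ∑ i ∈ B, (D i).card ≤ B.card := by
    rw [← Finset.card_biUnion hDdisj]
    exact Finset.card_le_card hDsub
  have hone : ∀ i ∈ B, 1 ≤ (D i).card := by
    intro i hi
    rw [Nat.one_le_iff_ne_zero, ← Nat.pos_iff_ne_zero, Finset.card_pos]
    exact ⟨τ i, by simp only [hD, Finset.mem_filter]; exact ⟨hτB i hi, hτ i hi⟩⟩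
  have hsum_eq : ∑ i ∈ B, 1 = ∑ i ∈ B, (D i).card := by
    have h1 : ∑ i ∈ B, 1 ≤ ∑ i ∈ B, (D i).card := Finset.sum_le_sum hone
    have h2 : (∑ _i ∈ B, 1 : ℕ) = B.card := by simp
    omega
  have hDone : ∀ i ∈ B, (D i).card = 1 := by
    intro i hi
    have := (Finset.sum_eq_sum_iff_of_le hone).mp hsum_eq i hi
    omega
  have hjB : j ∈ B := hclose (c t) (hcB t) j hNj
  have hjD : j ∈ D (c t) := by simp only [hD, Finset.mem_filter]; exact ⟨hjB, hNj⟩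
  have hτD : τ (c t) ∈ D (c t) := by
    simp only [hD, Finset.mem_filter]
    exact ⟨hτB _ (hcB t), hτ _ (hcB t)⟩
  have hjτ : j ≠ τ (c t) := by
    rw [← hsucc t]
    exact fun h => (hjoff (t + 1)) h.symm
  have hlt2 : 1 < (D (c t)).card :=
    Finset.one_lt_card.mpr ⟨j, hjD, τ (c t), hτD, hjτ⟩
  rw [hDone (c t) (hcB t)] at hlt2
  omega

lemma Aset_univ (n p m : ℕ) (hn : 0 < n) (hm : m ≤ n)
    (f : (Fin n → Bool) → (Fin p → Bool) → (Fin n → Bool))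
    (hP1 : ∀ i : Fin n, m ≤ i.val →
      ∃ j : Fin n, j ≠ i ∧ Nin f j = {Sum.inl i})
    (hP2 : ∀ (ℓ : ℕ) (c : Fin (ℓ + 1) → Fin n), Function.Injective c →
      (∀ t, m ≤ (c t).val) → (∀ t, dependsState f (c t) (c (t + 1))) →
      ∃ (t : Fin (ℓ + 1)) (j : Fin n), (∀ s, c s ≠ j) ∧ Nin f j = {Sum.inl (c t)}) :
    Aset n p m f (n - 1) = Finset.univ := by
  classical
  have claim : ∀ k, Aset n p m f k = Finset.univ ∨ k + 1 ≤ (Aset n p m f k).card := by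
    intro k
    induction k with
    | zero =>
      by_cases h : Aset n p m f 0 = Finset.univ
      · exact Or.inl h
      · right
        rw [Nat.succ_le_iff, Finset.card_pos]
        by_contra hemp
        rw [Finset.not_nonempty_iff_eq_empty] at hemp
        have hm0 : m = 0 := by
          by_contra hm0
          have : (⟨0, hn⟩ : Fin n) ∈ Aset n p m f 0 := by
            simp [Aset]
            omega
          rw [hemp] at this
          simp at this
        have hstable : Aset n p m f 1 = Aset n p m f 0 := by
          show Aset n p m f 0 ∪ _ = Aset n p m f 0
          rw [hemp]
          simp
        exact h (Aset_stable_univ n p m f hP1 hP2 0 hstable)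
    | succ k ih =>
      rcases ih with h | h
      · left
        have hsub : Aset n p m f k ⊆ Aset n p m f (k + 1) := by
          show Aset n p m f k ⊆ Aset n p m f k ∪ _
          exact Finset.subset_union_left
        rw [h] at hsub
        exact Finset.univ_subset_iff.mp hsub
      · by_cases he : Aset n p m f (k + 1) = Aset n p m f k
        · left
          rw [he]
          exact Aset_stable_univ n p m f hP1 hP2 k he
        · right
          have hsub : Aset n p m f k ⊆ Aset n p m f (k + 1) := by
            show Aset n p m f k ⊆ Aset n p m f k ∪ _
            exact Finset.subset_union_left
          have hlt : (Aset n p m f k).card < (Aset n p m f (k + 1)).card :=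
            Finset.card_lt_card (hsub.ssubset_of_ne (Ne.symm he))
          omega
  rcases claim (n - 1) with h | h
  · exact h
  · apply Finset.eq_univ_of_card
    have hle : (Aset n p m f (n - 1)).card ≤ n := by
      have := Finset.card_le_univ (Aset n p m f (n - 1))
      simpa using this
    simp only [Fintype.card_fin]
    omega


/-- If the dependency graph of a BCN (with outputs Y_j = X_j for j < m) satisfies
properties P1 and P2, then the BCN is observable on [0,N] for some N ≤ n - 1. -/
theorem P1_P2_implies_observable (n p m : ℕ) (hm : m ≤ n)
    (f : (Fin n → Bool) → (Fin p → Bool) → (Fin n → Bool))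
    (hP1 : ∀ i : Fin n, m ≤ i.val →
      ∃ j : Fin n, j ≠ i ∧ Nin f j = {Sum.inl i})
    (hP2 : ∀ (ℓ : ℕ) (c : Fin (ℓ + 1) → Fin n), Function.Injective c →
      (∀ t, m ≤ (c t).val) → (∀ t, dependsState f (c t) (c (t + 1))) →
      ∃ (t : Fin (ℓ + 1)) (j : Fin n), (∀ s, c s ≠ j) ∧ Nin f j = {Sum.inl (c t)}) :
    ∃ N ≤ n - 1, ∀ (U : ℕ → Fin p → Bool) (x0 x0' : Fin n → Bool), x0 ≠ x0' →
      ∃ k ≤ N, ∃ j : Fin n, j.val < m ∧ traj f U x0 k j ≠ traj f U x0' k j := by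
  classical
  refine ⟨n - 1, le_refl _, ?_⟩
  intro U x0 x0' hne
  have hex : ∃ i, x0 i ≠ x0' i := by
    by_contra h
    push_neg at h
    exact hne (funext h)
  obtain ⟨i, hi⟩ := hex
  have hn : 0 < n := lt_of_le_of_lt (Nat.zero_le _) i.isLt
  have huniv := Aset_univ n p m hn hm f hP1 hP2
  have key : ∀ k, ∀ i : Fin n, i ∈ Aset n p m f k →
      ∀ s, traj f U x0 s i ≠ traj f U x0' s i →
      ∃ k' ≤ s + k, ∃ j : Fin n, j.val < m ∧ traj f U x0 k' j ≠ traj f U x0' k' j := by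
    intro k
    induction k with
    | zero =>
      intro i hi s hdiff
      have him : i.val < m := by simpa [Aset] using hi
      exact ⟨s, by omega, i, him, hdiff⟩
    | succ k ih =>
      intro i hi s hdiff
      simp only [Aset, Finset.mem_union, Finset.mem_filter, Finset.mem_univ, true_and] at hi
      rcases hi with h | h
      · obtain ⟨k', hk', r⟩ := ih i h s hdiff
        exact ⟨k', by omega, r⟩
      · obtain ⟨j, hjA, hNj⟩ := h
        obtain ⟨g, hg, hloc⟩ := local_of_Nin f i j hNj
        have hdiff' : traj f U x0 (s + 1) j ≠ traj f U x0' (s + 1) j := by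
          show f (traj f U x0 s) (U s) j ≠ f (traj f U x0' s) (U s) j
          rw [hloc, hloc]
          intro hgeq
          apply hdiff
          cases h1 : traj f U x0 s i <;> cases h2 : traj f U x0' s i <;>
            rw [h1, h2] at hgeq <;> simp_all
        obtain ⟨k', hk', r⟩ := ih j hjA (s + 1) hdiff'
        exact ⟨k', by omega, r⟩
  have hiA : i ∈ Aset n p m f (n - 1) := huniv ▸ Finset.mem_univ i
  obtain ⟨k', hk', r⟩ := key (n - 1) i hiA 0 hi
  exact ⟨k', by omega, r⟩
end

section
/- Let G be a finite digraph on vertex set V with directly observable subset D, satisfying P1 and P2. Define the pointing relation v ↦ w iff v ≠ w and N_in(w) = {v}. Then for every non-directly observable vertex v there exists a finite pointing chain v = u_0 ↦ u_1 ↦ ⋯ ↦ u_q with u_q ∈ D. -/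
open Function

theorem Function.Injective.of_rel_apply {α : Type*} {R : α → α → Prop} {f : α → α}
    (hf : ∀ a, R a (f a)) (hR : Relator.LeftUnique R) : Injective f :=
  fun a b hab => hR (hf a) (hab ▸ hf b)

theorem eq_apply_of_rel_of_leftUnique {α : Type*} [Finite α] {R : α → α → Prop} {f : α → α}
    (hf : ∀ a, R a (f a)) (hR : Relator.LeftUnique R) {a b : α} (hab : R a b) : b = f a := by
  obtain ⟨c, rfl⟩ := Finite.surjective_of_injective (Injective.of_rel_apply hf hR) b
  rw [hR hab (hf c)]

theorem Function.exists_fin_cycle_of_mem_periodicPts {α : Type*} {f : α → α} {x : α}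
    (hx : x ∈ periodicPts f) :
    ∃ (ℓ : ℕ) (c : Fin (ℓ + 1) → α), Injective c ∧ ∀ t, c (t + 1) = f (c t) := by
  obtain ⟨ℓ, hℓ⟩ := Nat.exists_eq_add_one_of_ne_zero (minimalPeriod_pos_of_mem_periodicPts hx).ne'
  refine ⟨ℓ, fun t => f^[t] x, fun s t hst => Fin.ext ?_, fun t => ?_⟩
  · have hlt (i : Fin (ℓ + 1)) : (i : ℕ) ∈ Set.Iio (minimalPeriod f x) := by
      rw [Set.mem_Iio, hℓ]
      exact i.isLt
    exact iterate_injOn_Iio_minimalPeriod (hlt s) (hlt t) hst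
  · simp only [Fin.val_add, Fin.val_one', Nat.add_mod_mod, ← hℓ, iterate_mod_minimalPeriod_eq,
      iterate_succ_apply']

section Pointing

variable {V : Type} {E : V → V → Prop}

theorem pointsTo.edge {v w : V} (h : pointsTo E v w) : E v w :=
  (Set.ext_iff.mp h.2 v).mpr rfl

theorem pointsTo.leftUnique : Relator.LeftUnique (pointsTo E) :=
  fun _ _ _ h₁ h₂ => Set.singleton_eq_singleton_iff.mp (h₁.2.symm.trans h₂.2)

variable (E) (D : Set V)

def HasPointingChain (v : V) : Prop :=
  ∃ (q : ℕ) (u : ℕ → V), u 0 = v ∧ (∀ t < q, pointsTo E (u t) (u (t + 1))) ∧ u q ∈ D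

variable {E D}

theorem hasPointingChain_of_mem {v : V} (hv : v ∈ D) : HasPointingChain E D v :=
  ⟨0, fun _ => v, rfl, fun _ ht => absurd ht (Nat.not_lt_zero _), hv⟩

theorem HasPointingChain.cons {v w : V} (hvw : pointsTo E v w) (hw : HasPointingChain E D w) :
    HasPointingChain E D v := by
  obtain ⟨q, u, rfl, hu, huq⟩ := hw
  refine ⟨q + 1, Nat.rec v fun n _ => u n, rfl, fun t ht => ?_, huq⟩
  cases t with
  | zero => exact hvw
  | succ t => exact hu t (by omega)

end Pointing

/-- In a finite digraph satisfying P1 and P2, every non-directly-observable vertex has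
a finite pointing chain ending at a directly observable vertex. -/
theorem pointing_chain_to_observable (V : Type) [Fintype V]
    (E : V → V → Prop) (D : Set V)
    (hP1 : ∀ v ∉ D, ∃ w, pointsTo E v w)
    (hP2 : ∀ (ℓ : ℕ) (c : Fin (ℓ + 1) → V), Function.Injective c →
      (∀ t, c t ∉ D) → (∀ t, E (c t) (c (t + 1))) →
      ∃ (t : Fin (ℓ + 1)) (w : V), w ∉ Set.range c ∧ {u | E u w} = {c t}) :
    ∀ v ∉ D, ∃ (q : ℕ) (u : ℕ → V), u 0 = v ∧
      (∀ t < q, pointsTo E (u t) (u (t + 1))) ∧ u q ∈ D := by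
  intro v₀ _
  by_contra hv₀
  set B := {v | ¬ HasPointingChain E D v}
  have hBD : ∀ v ∈ B, v ∉ D := fun v hv hvD => hv (hasPointingChain_of_mem hvD)
  have hB_closed : ∀ v ∈ B, ∀ w, pointsTo E v w → w ∈ B := fun v hv w hvw hw => hv (hw.cons hvw)
  choose f hf using fun v : B =>
    let ⟨w, hvw⟩ := hP1 v (hBD v v.2)
    (⟨⟨w, hB_closed v v.2 w hvw⟩, hvw⟩ : ∃ w : B, pointsTo E v w)
  have hleft : Relator.LeftUnique fun v w : B => pointsTo E v w :=
    fun _ _ _ h₁ h₂ => Subtype.ext (pointsTo.leftUnique h₁ h₂)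
  obtain ⟨ℓ, c, hc, hcf⟩ := exists_fin_cycle_of_mem_periodicPts
    ((Injective.of_rel_apply hf hleft).mem_periodicPts ⟨v₀, hv₀⟩)
  obtain ⟨t, w, hw, hwt⟩ := hP2 ℓ (Subtype.val ∘ c) (Subtype.val_injective.comp hc)
    (fun t => hBD _ (c t).2) (fun t => by simpa only [comp_apply, hcf] using (hf (c t)).edge)
  have hpt : pointsTo E (c t) w := ⟨fun h => hw ⟨t, h⟩, hwt⟩
  have hsucc : ⟨w, hB_closed _ (c t).2 w hpt⟩ = c (t + 1) :=
    hcf t ▸ eq_apply_of_rel_of_leftUnique hf hleft hpt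
  exact hw ⟨t + 1, congrArg Subtype.val hsucc.symm⟩
end
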